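/- For x = (0,1,0,1,0,1,...) and y = (0,0,1,1,0,0,1,1,...) in Ω = {0,1}^ℕ, there exist no m, n ∈ ℕ with σ^m(x) = σ^n(y); equivalently d^∞(x,y) = +∞. Yet the counts of 1's satisfy |#{i ≤ n : x_i=1} − #{i ≤ n : y_i=1}| ≤ 1 for all n. -/
import Mathlib

noncomputable section

/-- The shift map on `Ω = {0,1}^ℕ`. -/
def shift (x : ℕ → Bool) : ℕ → Bool := fun n => x (n + 1)

/-- `x = (0,1,0,1,0,1,...)`. -/
def xseq : ℕ → Bool := fun n => decide (n % 2 = 1)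

/-- `y = (0,0,1,1,0,0,1,1,...)`. -/
def yseq : ℕ → Bool := fun n => decide (2 ≤ n % 4)

/-- `#{i ≤ n : z_i = 1}`. -/
def onesCount (n : ℕ) (z : ℕ → Bool) : ℕ :=
  ((Finset.range (n + 1)).filter fun i => z i = true).card

lemma shift_iter (z : ℕ → Bool) (m : ℕ) : shift^[m] z = fun k => z (k + m) := by
  induction m with
  | zero => simp
  | succ m ih =>
    rw [Function.iterate_succ_apply', ih]
    funext k
    simp [shift]
    ring_nf

lemma onesCount_succ (n : ℕ) (z : ℕ → Bool) :
    onesCount (n + 1) z = onesCount n z + if z (n + 1) then 1 else 0 := by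
  unfold onesCount
  rw [Finset.range_add_one, Finset.filter_insert]
  split
  · rw [Finset.card_insert_of_notMem (by simp)]
  · simp

lemma onesCount_x (n : ℕ) : onesCount n xseq = (n + 1) / 2 := by
  induction n with
  | zero => decide
  | succ n ih =>
    rw [onesCount_succ, ih]
    by_cases h : (n + 1) % 2 = 1 <;> simp [xseq, h] <;> omega

lemma onesCount_y (n : ℕ) :
    onesCount n yseq = 2 * ((n + 1) / 4) + (n + 1) % 4 - min ((n + 1) % 4) 2 := by
  induction n with
  | zero => decide
  | succ n ih =>
    rw [onesCount_succ, ih]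
    by_cases h : 2 ≤ (n + 1) % 4 <;> simp [yseq, h] <;> omega

/-- The orbits of `x = (01)^∞` and `y = (0011)^∞` never meet (so `d^∞(x,y) = +∞`),
yet their counts of `1`'s differ by at most `1` at every stage. -/
theorem stmt15 :
    (¬ ∃ m n : ℕ, shift^[m] xseq = shift^[n] yseq) ∧
      ∀ n : ℕ, ((onesCount n xseq : ℤ) - (onesCount n yseq : ℤ)).natAbs ≤ 1 := by
  constructor
  · rintro ⟨m, n, h⟩
    rw [shift_iter, shift_iter] at h
    have h0 := congrFun h 0
    have h2 := congrFun h 2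
    simp only [xseq, yseq, decide_eq_decide] at h0 h2
    omega
  · intro n
    rw [onesCount_x, onesCount_y]
    omega
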